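/- arXiv:2604.09460 — 2 statements merged into one kernel-verified Lean document; each statement's English description precedes it below -/
import Mathlib

section
/- The nondiscriminating SB σ^{PC} defined by σ^{PC}(G) = PCEP for all positions G is conservatively internally stable for the coalitional repeated game situation (γ^C, Γ): no path in PCEP is conservatively dominated at any position relative to σ^{PC}. -/
open Set

section Setup

variable {N : Type*} [Fintype N] [DecidableEq N] {Z : N → Type*}

/-- A stage-game action profile. -/
abbrev Profile (Z : N → Type*) := ∀ i, Z i

/-- An infinite path of action profiles. -/
abbrev RPath (Z : N → Type*) := ℕ → Profile Z

/-- The profile played in period `τ` when coalition `C` deviates to `ζ` (off `C`, players follow `x τ`). -/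
def devProfile (x : RPath Z) (C : Finset N) (τ : ℕ) (ζ : Profile Z) : Profile Z :=
  fun i => if i ∈ C then ζ i else x τ i

/-- The spliced path `(x; ζ^C_τ; y)`: follow `x` before period `τ`, play the deviation profile at `τ`,
and follow `y` afterwards.  Periods are indexed from `0`. -/
def splice (x : RPath Z) (C : Finset N) (τ : ℕ) (ζ : Profile Z) (y : RPath Z) : RPath Z :=
  fun t => if t < τ then x t else if t = τ then devProfile x C τ ζ else y (t - τ - 1)

/-- Discounted payoff `U_i(x) = (1-δ) ∑ δ^t u_i(x_t)`. -/
noncomputable def disc (u : N → Profile Z → ℝ) (δ : ℝ) (i : N) (x : RPath Z) : ℝ :=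
  (1 - δ) * ∑' t : ℕ, δ ^ t * u i (x t)

/-- The coalitional enforceability operator `Ψ`. -/
def Psi (u : N → Profile Z → ℝ) (δ : ℝ) (Y : Set (RPath Z)) : Set (RPath Z) :=
  {x | ∀ C : Finset N, C.Nonempty → ∀ τ : ℕ, ∀ ζ : Profile Z,
    ∃ p : N → RPath Z, (∀ i, p i ∈ Y) ∧
      ∃ i ∈ C, disc u δ i x ≥ disc u δ i (splice x C τ ζ (p i))}

/-- A history (position) is a finite list of past action profiles. -/
abbrev Hist (Z : N → Type*) := List (Profile Z)

/-- The history reached after `n` periods of following plan `f` from history `h`. -/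
def planHist (f : Hist Z → Profile Z) (h : Hist Z) : ℕ → Hist Z
  | 0 => h
  | n + 1 => planHist f h n ++ [f (planHist f h n)]

/-- The continuation path prescribed by plan `f` after history `h`. -/
def planPath (f : Hist Z → Profile Z) (h : Hist Z) : RPath Z :=
  fun n => f (planHist f h n)

/-- The position induced from `G` when coalition `C` deviates from path `x` in period `τ` via `ζ`. -/
def devHistory (G : Hist Z) (x : RPath Z) (C : Finset N) (τ : ℕ) (ζ : Profile Z) : Hist Z :=
  G ++ (List.ofFn fun t : Fin τ => x t) ++ [devProfile x C τ ζ]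

/-- A Perfect Coalitional Equilibrium: after every history, every one-shot coalitional deviation
leaves some member of the deviating coalition no better off, given the plan's continuation. -/
def IsPCE (u : N → Profile Z → ℝ) (δ : ℝ) (f : Hist Z → Profile Z) : Prop :=
  ∀ h : Hist Z, ∀ C : Finset N, C.Nonempty → ∀ τ : ℕ, ∀ ζ : Profile Z,
    ∃ i ∈ C, disc u δ i (planPath f h) ≥
      disc u δ i (splice (planPath f h) C τ ζ (planPath f (devHistory h (planPath f h) C τ ζ)))

/-- The set of Perfect Coalitional Equilibrium paths. -/
def PCEP (u : N → Profile Z → ℝ) (δ : ℝ) : Set (RPath Z) :=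
  {x | ∃ f : Hist Z → Profile Z, IsPCE u δ f ∧ planPath f [] = x}

/-- Payoff at position `G`: `u_i(G)(x) = a_i(G) + δ^{|G|} U_i(x)`. -/
noncomputable def posPayoff (u : N → Profile Z → ℝ) (δ : ℝ) (i : N) (G : Hist Z)
    (x : RPath Z) : ℝ :=
  (1 - δ) * (∑ t : Fin G.length, δ ^ (t : ℕ) * u i (G.get t)) + δ ^ G.length * disc u δ i x

/-- The conservative dominion of position `G` relative to the standard of behavior `σ`. -/
def CDOM (u : N → Profile Z → ℝ) (δ : ℝ) (σ : Hist Z → Set (RPath Z)) (G : Hist Z) :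
    Set (RPath Z) :=
  {x | ∃ C : Finset N, C.Nonempty ∧ ∃ τ : ℕ, ∃ ζ : Profile Z,
    (σ (devHistory G x C τ ζ)).Nonempty ∧
    ∀ y ∈ σ (devHistory G x C τ ζ), ∀ i ∈ C,
      posPayoff u δ i (devHistory G x C τ ζ) y > posPayoff u δ i G x}

/-- A standard of behavior is nondiscriminating if it assigns the same set to every position. -/
def Nondiscriminating (σ : Hist Z → Set (RPath Z)) : Prop := ∀ G H, σ G = σ H

/-- Conservative internal stability. -/
def ConsInternallyStable (u : N → Profile Z → ℝ) (δ : ℝ) (σ : Hist Z → Set (RPath Z)) : Prop :=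
  ∀ G, σ G ∩ CDOM u δ σ G = ∅

/-- Conservative external stability. -/
def ConsExternallyStable (u : N → Profile Z → ℝ) (δ : ℝ) (σ : Hist Z → Set (RPath Z)) : Prop :=
  ∀ G, (σ G)ᶜ ⊆ CDOM u δ σ G

end Setup


/-! Let `x = planPath f []` with `f` a PCE. After a deviation of `C` at `τ`, the plan `f`
prescribes a continuation that is itself a PCE path (subgames of a PCE are PCE), hence lies in
`σ^PC` at the induced position; the PCE condition yields a member of `C` who does not gain
against it, whereas domination asks every member to gain against every path of `σ^PC`. Both
comparisons concern the same numbers, since the payoff at position `G` is `a(G) + δ^|G| U(·)`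
and the payoff after the deviation history is that of the spliced path. -/

theorem Fin.sum_univ_get_append {α M : Type*} [AddCommMonoid M] (f : ℕ → α → M)
    (G L : List α) :
    ∑ t : Fin (G ++ L).length, f t ((G ++ L).get t) =
      ∑ t : Fin G.length, f t (G.get t) + ∑ t : Fin L.length, f (G.length + t) (L.get t) := by
  induction G generalizing f with
  | nil => simp
  | cons a G ih =>
    simp only [List.cons_append, List.length_cons, Fin.sum_univ_succ, List.get_cons_zero,
      Fin.val_succ, Fin.val_zero, add_assoc, add_comm 1]
    exact congrArg (f 0 a + ·) (ih fun t => f (t + 1))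

theorem Fin.sum_univ_get_ofFn {α M : Type*} [AddCommMonoid M] (f : ℕ → α → M) {n : ℕ}
    (g : Fin n → α) :
    ∑ t : Fin (List.ofFn g).length, f t ((List.ofFn g).get t) = ∑ t : Fin n, f t (g t) :=
  Fintype.sum_equiv (finCongr List.length_ofFn) _ _ (fun t => by simp; rfl)

section Payoffs

variable {N : Type*} {Z : N → Type*}

theorem summable_discounted [∀ i, TopologicalSpace (Z i)] [∀ i, CompactSpace (Z i)]
    {u : N → Profile Z → ℝ} {δ : ℝ} {i : N} (hu : Continuous (u i)) (hδ0 : 0 ≤ δ) (hδ1 : δ < 1)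
    (x : RPath Z) :
    Summable fun t => δ ^ t * u i (x t) := by
  obtain ⟨M, hM⟩ := isCompact_univ.exists_bound_of_continuousOn hu.continuousOn
  refine .of_norm_bounded ((summable_geometric_of_lt_one hδ0 hδ1).mul_right M) fun t => ?_
  rw [norm_mul, norm_pow, Real.norm_of_nonneg hδ0]
  exact mul_le_mul_of_nonneg_left (hM _ (mem_univ _)) (pow_nonneg hδ0 t)

theorem posPayoff_append (u : N → Profile Z → ℝ) (δ : ℝ) (i : N) (G L : Hist Z) (y : RPath Z) :
    posPayoff u δ i (G ++ L) y =
      (1 - δ) * ∑ t : Fin G.length, δ ^ (t : ℕ) * u i (G.get t) +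
        δ ^ G.length * posPayoff u δ i L y := by
  simp only [posPayoff, Fin.sum_univ_get_append (fun t a => δ ^ t * u i a), pow_add,
    List.length_append, ← Finset.mul_sum, mul_assoc]
  ring

theorem disc_eq_posPayoff_ofFn {u : N → Profile Z → ℝ} {δ : ℝ} {i : N} {x : RPath Z}
    (hx : Summable fun t => δ ^ t * u i (x t)) (n : ℕ) :
    disc u δ i x = posPayoff u δ i (List.ofFn fun t : Fin n => x t) fun t => x (n + t) := by
  simp only [posPayoff, disc, List.length_ofFn, Fin.sum_univ_get_ofFn (fun t a => δ ^ t * u i a),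
    Fin.sum_univ_eq_sum_range (fun t => δ ^ t * u i (x t)), ← hx.sum_add_tsum_nat_add n]
  simp only [pow_add, add_comm _ n, mul_assoc, tsum_mul_left]
  ring

theorem splice_add_succ [DecidableEq N] (x : RPath Z) (C : Finset N) (τ : ℕ) (ζ : Profile Z)
    (y : RPath Z) (t : ℕ) : splice x C τ ζ y (τ + 1 + t) = y t := by
  simp only [splice, if_neg (show ¬τ + 1 + t < τ by omega), if_neg (show τ + 1 + t ≠ τ by omega)]
  congr 1
  omega

theorem devHistory_eq_append_ofFn_splice [DecidableEq N] (G : Hist Z) (x : RPath Z)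
    (C : Finset N) (τ : ℕ) (ζ : Profile Z) (y : RPath Z) :
    devHistory G x C τ ζ = G ++ List.ofFn fun t : Fin (τ + 1) => splice x C τ ζ y t := by
  rw [devHistory, List.ofFn_succ_last, List.append_assoc]
  simp [splice]

theorem posPayoff_devHistory [DecidableEq N] [∀ i, TopologicalSpace (Z i)]
    [∀ i, CompactSpace (Z i)] {u : N → Profile Z → ℝ} {δ : ℝ} {i : N} (hu : Continuous (u i))
    (hδ0 : 0 ≤ δ) (hδ1 : δ < 1) (G : Hist Z) (x : RPath Z) (C : Finset N) (τ : ℕ)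
    (ζ : Profile Z) (y : RPath Z) :
    posPayoff u δ i (devHistory G x C τ ζ) y = posPayoff u δ i G (splice x C τ ζ y) := by
  rw [devHistory_eq_append_ofFn_splice G x C τ ζ y, posPayoff_append]
  conv_rhs => rw [posPayoff, disc_eq_posPayoff_ofFn (summable_discounted hu hδ0 hδ1 _) (τ + 1)]
  simp only [splice_add_succ]

theorem posPayoff_lt_posPayoff_iff {u : N → Profile Z → ℝ} {δ : ℝ} (hδ : 0 < δ) (i : N)
    (G : Hist Z) (x y : RPath Z) :
    posPayoff u δ i G x < posPayoff u δ i G y ↔ disc u δ i x < disc u δ i y := by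
  rw [posPayoff, posPayoff, add_lt_add_iff_left, mul_lt_mul_iff_right₀ (pow_pos hδ _)]

end Payoffs

section Subgames

variable {N : Type*} {Z : N → Type*}

def restrictPlan (f : Hist Z → Profile Z) (h : Hist Z) : Hist Z → Profile Z :=
  fun k => f (h ++ k)

theorem append_planHist_restrictPlan (f : Hist Z → Profile Z) (h h' : Hist Z) (n : ℕ) :
    h ++ planHist (restrictPlan f h) h' n = planHist f (h ++ h') n := by
  induction n with
  | zero => rfl
  | succ n ih => rw [planHist, planHist, ← List.append_assoc, ih, restrictPlan, ih]

theorem planPath_restrictPlan (f : Hist Z → Profile Z) (h h' : Hist Z) :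
    planPath (restrictPlan f h) h' = planPath f (h ++ h') :=
  funext fun n => congrArg f (append_planHist_restrictPlan f h h' n)

theorem IsPCE.restrict [DecidableEq N] {u : N → Profile Z → ℝ} {δ : ℝ}
    {f : Hist Z → Profile Z} (hf : IsPCE u δ f) (h : Hist Z) :
    IsPCE u δ (restrictPlan f h) := by
  intro h' C hC τ ζ
  simpa only [planPath_restrictPlan, restrictPlan, devHistory, List.append_assoc]
    using hf (h ++ h') C hC τ ζ

theorem IsPCE.planPath_mem_PCEP [DecidableEq N] {u : N → Profile Z → ℝ} {δ : ℝ}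
    {f : Hist Z → Profile Z} (hf : IsPCE u δ f) (h : Hist Z) : planPath f h ∈ PCEP u δ :=
  ⟨restrictPlan f h, hf.restrict h, by rw [planPath_restrictPlan, List.append_nil]⟩

end Subgames

theorem sigmaPC_internally_stable_general {N : Type*} [DecidableEq N] {Z : N → Type*}
    [∀ i, MetricSpace (Z i)] [∀ i, CompactSpace (Z i)]
    (u : N → Profile Z → ℝ) (δ : ℝ)
    (hu : ∀ i, Continuous (u i)) (hδ0 : 0 < δ) (hδ1 : δ < 1) :
    ConsInternallyStable u δ (fun _ : Hist Z => PCEP u δ) := by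
  refine fun G => Set.eq_empty_of_forall_notMem ?_
  rintro _ ⟨⟨f, hf, rfl⟩, C, hC, τ, ζ, -, hdom⟩
  obtain ⟨i, hiC, hle⟩ := hf [] C hC τ ζ
  have hlt := hdom _ (hf.planPath_mem_PCEP (devHistory [] (planPath f []) C τ ζ)) i hiC
  rw [gt_iff_lt, posPayoff_devHistory (hu i) hδ0.le hδ1, posPayoff_lt_posPayoff_iff hδ0] at hlt
  exact hlt.not_ge hle

theorem sigmaPC_internally_stable {N : Type*} [Fintype N] [DecidableEq N] {Z : N → Type*}
    [∀ i, MetricSpace (Z i)] [∀ i, CompactSpace (Z i)] [∀ i, Nonempty (Z i)]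
    (u : N → Profile Z → ℝ) (δ : ℝ)
    (hu : ∀ i, Continuous (u i)) (hδ0 : 0 < δ) (hδ1 : δ < 1) :
    ConsInternallyStable u δ (fun _ : Hist Z => PCEP u δ) :=
  sigmaPC_internally_stable_general u δ hu hδ0 hδ1
end

section
/- If {Y^k}_{k≥0} is a decreasing sequence of compact subsets of X with Y^{k+1} = Ψ(Y^k), then the intersection Y^∞ = ⋂_k Y^k satisfies Y^∞ ⊆ Ψ(Y^∞). -/
open Set

/-!
For a fixed deviation `ζ^C_τ` from `x`, the continuations after which some member of `C` does not
gain form a closed set `D`: a finite union over `C` of sets cut out by continuous payoffs. Since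
`x ∈ Y^{k+1} = Ψ(Y^k)`, every `Y^k ∩ D` is nonempty, so by Cantor's intersection theorem so is
`Y^∞ ∩ D`, and a single point of it punishes every player.
-/

section Enforceability

variable {N : Type*} {Z : N → Type*}

theorem continuous_disc [∀ i, TopologicalSpace (Z i)] [∀ i, CompactSpace (Z i)]
    {u : N → Profile Z → ℝ} {δ : ℝ} (hu : ∀ i, Continuous (u i)) (hδ0 : 0 < δ) (hδ1 : δ < 1)
    (i : N) : Continuous (disc u δ i) := by
  obtain ⟨M, hM⟩ := isCompact_univ.exists_bound_of_continuousOn (hu i).continuousOn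
  refine continuous_const.mul (continuous_tsum (u := fun t => δ ^ t * M)
    (fun t => continuous_const.mul ((hu i).comp (continuous_apply t)))
    ((summable_geometric_of_lt_one hδ0.le hδ1).mul_right M) fun t x => ?_)
  rw [norm_mul, norm_pow, Real.norm_of_nonneg hδ0.le]
  exact mul_le_mul_of_nonneg_left (hM (x t) trivial) (by positivity)

variable [DecidableEq N]

def deterrents (u : N → Profile Z → ℝ) (δ : ℝ) (x : RPath Z) (C : Finset N) (τ : ℕ)
    (ζ : Profile Z) : Set (RPath Z) :=
  ⋃ i ∈ C, {y | disc u δ i x ≥ disc u δ i (splice x C τ ζ y)}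

theorem mem_Psi_iff {u : N → Profile Z → ℝ} {δ : ℝ} {Y : Set (RPath Z)} {x : RPath Z} :
    x ∈ Psi u δ Y ↔
      ∀ C : Finset N, C.Nonempty → ∀ τ ζ, (Y ∩ deterrents u δ x C τ ζ).Nonempty := by
  refine forall₄_congr fun C _ τ ζ => ⟨?_, ?_⟩
  · rintro ⟨p, hpY, i, hiC, hi⟩
    exact ⟨p i, hpY i, mem_iUnion₂.2 ⟨i, hiC, hi⟩⟩
  · rintro ⟨y, hyY, hy⟩
    obtain ⟨i, hiC, hi⟩ := mem_iUnion₂.1 hy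
    exact ⟨fun _ => y, fun _ => hyY, i, hiC, hi⟩

variable [∀ i, TopologicalSpace (Z i)]

theorem continuous_splice (x : RPath Z) (C : Finset N) (τ : ℕ) (ζ : Profile Z) :
    Continuous (splice x C τ ζ) :=
  continuous_pi fun t => by
    unfold splice
    split_ifs
    exacts [continuous_const, continuous_const, continuous_apply _]

theorem isClosed_deterrents [∀ i, CompactSpace (Z i)] {u : N → Profile Z → ℝ} {δ : ℝ}
    (hu : ∀ i, Continuous (u i)) (hδ0 : 0 < δ) (hδ1 : δ < 1) (x : RPath Z) (C : Finset N)
    (τ : ℕ) (ζ : Profile Z) : IsClosed (deterrents u δ x C τ ζ) :=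
  isClosed_biUnion_finset fun i _ =>
    isClosed_le ((continuous_disc hu hδ0 hδ1 i).comp (continuous_splice x C τ ζ))
      continuous_const

end Enforceability

theorem iInter_self_generating_general {N : Type*} [DecidableEq N] {Z : N → Type*}
    [∀ i, MetricSpace (Z i)] [∀ i, CompactSpace (Z i)]
    (u : N → Profile Z → ℝ) (δ : ℝ)
    (hu : ∀ i, Continuous (u i)) (hδ0 : 0 < δ) (hδ1 : δ < 1)
    (Y : ℕ → Set (RPath Z)) (hdec : ∀ k, Y (k + 1) ⊆ Y k)
    (hcomp : ∀ k, IsCompact (Y k)) (hiter : ∀ k, Y (k + 1) = Psi u δ (Y k)) :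
    (⋂ k, Y k) ⊆ Psi u δ (⋂ k, Y k) := by
  intro x hx
  refine mem_Psi_iff.2 fun C hC τ ζ => ?_
  have hD := isClosed_deterrents hu hδ0 hδ1 x C τ ζ
  have hstage : ∀ k, (Y k ∩ deterrents u δ x C τ ζ).Nonempty := fun k =>
    mem_Psi_iff.1 (hiter k ▸ mem_iInter.1 hx (k + 1)) C hC τ ζ
  rw [iInter_inter]
  exact IsCompact.nonempty_iInter_of_sequence_nonempty_isCompact_isClosed _
    (fun k => inter_subset_inter_left _ (hdec k)) hstage ((hcomp 0).inter_right hD)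
    fun k => (hcomp k).isClosed.inter hD

theorem iInter_self_generating {N : Type*} [Fintype N] [DecidableEq N] {Z : N → Type*}
    [∀ i, MetricSpace (Z i)] [∀ i, CompactSpace (Z i)] [∀ i, Nonempty (Z i)]
    (u : N → Profile Z → ℝ) (δ : ℝ)
    (hu : ∀ i, Continuous (u i)) (hδ0 : 0 < δ) (hδ1 : δ < 1)
    (Y : ℕ → Set (RPath Z)) (hdec : ∀ k, Y (k + 1) ⊆ Y k)
    (hcomp : ∀ k, IsCompact (Y k)) (hiter : ∀ k, Y (k + 1) = Psi u δ (Y k)) :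
    (⋂ k, Y k) ⊆ Psi u δ (⋂ k, Y k) :=
  iInter_self_generating_general u δ hu hδ0 hδ1 Y hdec hcomp hiter
end
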